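/- Let A ⊆ ℝ^d be finite, θ̂, θ* ∈ ℝ^d, Σ positive definite, β > 0 with ‖θ̂ − θ*‖_Σ ≤ β, and let C = {x ∈ A : ∀y ∈ A, ⟨x − y, θ̂⟩ + β‖x − y‖_{Σ⁻¹} ≥ 0}. If (x_t, y_t) maximizes ‖x − y‖_{Σ⁻¹} over pairs in C, then 2⟨x*, θ*⟩ − ⟨x_t + y_t, θ*⟩ ≤ 4β‖x_t − y_t‖_{Σ⁻¹}, where x* = argmax_{x∈A}⟨x, θ*⟩. -/

import Mathlib

/-!
Write `‖v‖` for `√(vᵀΣ⁻¹v)`. By the dual Cauchy–Schwarz inequality `|⟨v, w⟩| ≤ ‖v‖ ‖w‖_Σ`, the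
confidence bound `‖θ̂ − θ*‖_Σ ≤ β` says that `⟨v, θ̂⟩` and `⟨v, θ*⟩` differ by at most `β ‖v‖`.
Hence the optimal arm `x*` is never eliminated, and every surviving arm `x` has
`⟨x* − x, θ*⟩ ≤ ⟨x* − x, θ̂⟩ + β ‖x* − x‖ ≤ 2β ‖x* − x‖ ≤ 2β ‖x_t − y_t‖`,
the last step by maximality of the pair `(x_t, y_t)`. Adding this for `x = x_t` and `x = y_t`
gives the bound.
-/

open Matrix

section QuadraticForm

variable {n : Type*} [Fintype n]

theorem dotProduct_mulVec_sub_comm (M : Matrix n n ℝ) (x y : n → ℝ) :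
    (x - y) ⬝ᵥ M *ᵥ (x - y) = (y - x) ⬝ᵥ M *ᵥ (y - x) := by
  rw [← neg_sub x y, mulVec_neg, neg_dotProduct, dotProduct_neg, neg_neg]

theorem Matrix.PosSemidef.abs_dotProduct_mulVec_le {M : Matrix n n ℝ} (hM : M.PosSemidef)
    (v w : n → ℝ) : |v ⬝ᵥ M *ᵥ w| ≤ √(v ⬝ᵥ M *ᵥ v) * √(w ⬝ᵥ M *ᵥ w) := by
  let := M.toSeminormedAddCommGroup hM
  let := M.toInnerProductSpace hM
  have hinner : ∀ x y : n → ℝ, (inner ℝ x y : ℝ) = x ⬝ᵥ M *ᵥ y := fun x y => by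
    change (M *ᵥ y) ⬝ᵥ star x = _
    simp [dotProduct_comm]
  have hcs := real_inner_mul_inner_self_le v w
  simp only [hinner] at hcs
  rw [← Real.sqrt_mul (by simpa using hM.dotProduct_mulVec_nonneg v)]
  exact Real.abs_le_sqrt (by nlinarith)

theorem Matrix.PosDef.abs_dotProduct_le [DecidableEq n] {S : Matrix n n ℝ} (hS : S.PosDef)
    (v w : n → ℝ) : |v ⬝ᵥ w| ≤ √(v ⬝ᵥ S⁻¹ *ᵥ v) * √(w ⬝ᵥ S *ᵥ w) := by
  have hinv : S⁻¹ * S = 1 := nonsing_inv_mul S (isUnit_iff_ne_zero.mpr hS.det_pos.ne')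
  have hv : v ⬝ᵥ w = v ⬝ᵥ S⁻¹ *ᵥ (S *ᵥ w) := by
    rw [mulVec_mulVec, hinv, one_mulVec]
  have hw : (S *ᵥ w) ⬝ᵥ S⁻¹ *ᵥ (S *ᵥ w) = w ⬝ᵥ S *ᵥ w := by
    rw [mulVec_mulVec, hinv, one_mulVec, dotProduct_comm]
  simpa only [← hv, hw] using hS.inv.posSemidef.abs_dotProduct_mulVec_le v (S *ᵥ w)

end QuadraticForm

section Elimination

variable {n : Type*} [Fintype n] {M : Matrix n n ℝ} {β : ℝ} {θhat θstar : n → ℝ}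

/-- An arm that is at least as good as `y` under `θstar` is not eliminated by `y`. -/
theorem dotProduct_sub_add_mul_sqrt_nonneg
    (hconf : ∀ v, |v ⬝ᵥ (θhat - θstar)| ≤ β * √(v ⬝ᵥ M *ᵥ v)) {x y : n → ℝ}
    (hxy : y ⬝ᵥ θstar ≤ x ⬝ᵥ θstar) :
    0 ≤ (x - y) ⬝ᵥ θhat + β * √((x - y) ⬝ᵥ M *ᵥ (x - y)) := by
  have h := (abs_le.mp (hconf (x - y))).1
  rw [dotProduct_sub, sub_dotProduct x y θstar] at h
  linarith

theorem dotProduct_sub_le_two_mul_sqrt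
    (hconf : ∀ v, |v ⬝ᵥ (θhat - θstar)| ≤ β * √(v ⬝ᵥ M *ᵥ v)) {x y : n → ℝ}
    (hy : 0 ≤ (y - x) ⬝ᵥ θhat + β * √((y - x) ⬝ᵥ M *ᵥ (y - x))) :
    (x - y) ⬝ᵥ θstar ≤ 2 * β * √((x - y) ⬝ᵥ M *ᵥ (x - y)) := by
  have h := (abs_le.mp (hconf (x - y))).1
  rw [← dotProduct_mulVec_sub_comm, ← neg_sub x y, neg_dotProduct] at hy
  rw [dotProduct_sub] at h
  linarith

end Elimination

theorem stmt_15_general {d : ℕ} (A : Finset (Fin d → ℝ))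
    (Sig : Matrix (Fin d) (Fin d) ℝ) (hSig : Sig.PosDef)
    (β : ℝ) (θhat θstar xstar xt yt : Fin d → ℝ)
    (hconc : Real.sqrt ((θhat - θstar) ⬝ᵥ Sig.mulVec (θhat - θstar)) ≤ β)
    (hxstar : xstar ∈ A) (hopt : ∀ x ∈ A, x ⬝ᵥ θstar ≤ xstar ⬝ᵥ θstar)
    (C : Finset (Fin d → ℝ))
    (hC : C = {x ∈ A | ∀ y ∈ A,
      0 ≤ (x - y) ⬝ᵥ θhat + β * Real.sqrt ((x - y) ⬝ᵥ Sig⁻¹.mulVec (x - y))})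
    (hxt : xt ∈ C) (hyt : yt ∈ C)
    (hmax : ∀ x ∈ C, ∀ y ∈ C,
      Real.sqrt ((x - y) ⬝ᵥ Sig⁻¹.mulVec (x - y)) ≤
      Real.sqrt ((xt - yt) ⬝ᵥ Sig⁻¹.mulVec (xt - yt))) :
    2 * (xstar ⬝ᵥ θstar) - (xt + yt) ⬝ᵥ θstar ≤
      4 * β * Real.sqrt ((xt - yt) ⬝ᵥ Sig⁻¹.mulVec (xt - yt)) := by
  have hβ : 0 ≤ β := (Real.sqrt_nonneg _).trans hconc
  have hconf : ∀ v, |v ⬝ᵥ (θhat - θstar)| ≤ β * √(v ⬝ᵥ Sig⁻¹ *ᵥ v) := fun v =>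
    (hSig.abs_dotProduct_le v _).trans (by rw [mul_comm]; gcongr)
  have hxstarC : xstar ∈ C := hC ▸ Finset.mem_filter.mpr
    ⟨hxstar, fun y hy => dotProduct_sub_add_mul_sqrt_nonneg hconf (hopt y hy)⟩
  have hgap : ∀ x ∈ C, (xstar - x) ⬝ᵥ θstar ≤
      2 * β * √((xt - yt) ⬝ᵥ Sig⁻¹ *ᵥ (xt - yt)) := fun x hx => by
    have hx' := hx
    rw [hC, Finset.mem_filter] at hx'
    exact (dotProduct_sub_le_two_mul_sqrt hconf (hx'.2 xstar hxstar)).trans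
      (mul_le_mul_of_nonneg_left (hmax _ hxstarC _ hx) (by positivity))
  have hxt' := hgap xt hxt
  have hyt' := hgap yt hyt
  rw [sub_dotProduct] at hxt' hyt'
  rw [add_dotProduct]
  linarith

theorem stmt_15 {d : ℕ} (A : Finset (Fin d → ℝ))
    (Sig : Matrix (Fin d) (Fin d) ℝ) (hSig : Sig.PosDef)
    (β : ℝ) (hβ : 0 < β) (θhat θstar xstar xt yt : Fin d → ℝ)
    (hconc : Real.sqrt ((θhat - θstar) ⬝ᵥ Sig.mulVec (θhat - θstar)) ≤ β)
    (hxstar : xstar ∈ A) (hopt : ∀ x ∈ A, x ⬝ᵥ θstar ≤ xstar ⬝ᵥ θstar)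
    (C : Finset (Fin d → ℝ))
    (hC : C = {x ∈ A | ∀ y ∈ A,
      0 ≤ (x - y) ⬝ᵥ θhat + β * Real.sqrt ((x - y) ⬝ᵥ Sig⁻¹.mulVec (x - y))})
    (hxt : xt ∈ C) (hyt : yt ∈ C)
    (hmax : ∀ x ∈ C, ∀ y ∈ C,
      Real.sqrt ((x - y) ⬝ᵥ Sig⁻¹.mulVec (x - y)) ≤
      Real.sqrt ((xt - yt) ⬝ᵥ Sig⁻¹.mulVec (xt - yt))) :
    2 * (xstar ⬝ᵥ θstar) - (xt + yt) ⬝ᵥ θstar ≤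
      4 * β * Real.sqrt ((xt - yt) ⬝ᵥ Sig⁻¹.mulVec (xt - yt)) :=
  stmt_15_general A Sig hSig β θhat θstar xstar xt yt hconc hxstar hopt C hC hxt hyt hmax
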